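/- arXiv:1610.07499 — 2 statements merged into one kernel-verified Lean document; each statement's English description precedes it below -/
import Mathlib

section
/- Let G = (V,E,L) be an undirected labeled graph with L = {ℓ, ℓ̄} (i.e., E is symmetric: (v,θ,w) ∈ E iff (w,θ,v) ∈ E), and let s ≠ t be two vertices. There exists a path from s to t whose label is a Dyck word over the single parenthesis pair (ℓ, ℓ̄) if and only if: (1) there exists x with (s,ℓ,x) ∈ E, (2) there exists y with (t,ℓ̄,y) ∈ E, and (3) there exists a path of even length from s to t in G. -/
/-- Paths in a labeled graph: `PathLabel E u v w` means there is a path from `u`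
to `v` whose label is the word `w`. -/
inductive PathLabel {V Λ : Type*} (E : V → Λ → V → Prop) : V → V → List Λ → Prop
  | nil (v : V) : PathLabel E v v []
  | cons {u v w : V} {l : Λ} {ls : List Λ} :
      E u l v → PathLabel E v w ls → PathLabel E u w (l :: ls)

/-- The one-letter Dyck language over `Bool`, where `false` is the opening
letter `ℓ` and `true` is the closing letter `ℓ̄`. -/
inductive Dyck1 : List Bool → Prop
  | nil : Dyck1 []
  | cons {u v : List Bool} : Dyck1 u → Dyck1 v → Dyck1 (false :: u ++ true :: v)

open DyckStep List

private def stepToBool : DyckStep → Bool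
  | U => false
  | D => true

private def boolToStep : Bool → DyckStep
  | false => U
  | true => D

private lemma dyck1_of_dyckWord (p : DyckWord) : Dyck1 (p.toList.map stepToBool) := by
  suffices H : ∀ n (p : DyckWord), p.semilength = n → Dyck1 (p.toList.map stepToBool) from
    H _ p rfl
  intro n
  induction n using Nat.strong_induction_on with
  | _ n ih =>
  intro p hn
  by_cases h : p = 0
  · subst h; exact Dyck1.nil
  · have hd := p.nest_insidePart_add_outsidePart h
    have h1 := p.semilength_insidePart_lt h
    have h2 := p.semilength_outsidePart_lt h
    have : p.toList = U :: (p.insidePart.toList ++ D :: p.outsidePart.toList) := by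
      conv_lhs => rw [← hd]
      show ([U] ++ p.insidePart.toList ++ [D]) ++ p.outsidePart.toList = _
      simp
    rw [this]
    simp only [List.map_cons, List.map_append, stepToBool]
    exact Dyck1.cons (ih _ (hn ▸ h1) _ rfl) (ih _ (hn ▸ h2) _ rfl)

private lemma count_boolToStep_U (w : List Bool) :
    (w.map boolToStep).count U = w.count false := by
  induction w with
  | nil => rfl
  | cons a l ih => cases a <;> simp [boolToStep, ih, List.count_cons]

private lemma count_boolToStep_D (w : List Bool) :
    (w.map boolToStep).count D = w.count true := by
  induction w with
  | nil => rfl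
  | cons a l ih => cases a <;> simp [boolToStep, ih, List.count_cons]

private lemma dyck1_of_balanced (w : List Bool) (hc : w.count false = w.count true)
    (hp : ∀ i, (w.take i).count true ≤ (w.take i).count false) : Dyck1 w := by
  let p : DyckWord :=
    ⟨w.map boolToStep, by rw [count_boolToStep_U, count_boolToStep_D, hc], fun i => by
      rw [← List.map_take, count_boolToStep_U, count_boolToStep_D]; exact hp i⟩
  have := dyck1_of_dyckWord p
  have hmap : (w.map boolToStep).map stepToBool = w := by
    rw [List.map_map]
    have : stepToBool ∘ boolToStep = id := by
      funext b; cases b <;> rfl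
    simp [this]
  rwa [show p.toList = w.map boolToStep from rfl, hmap] at this

private lemma PathLabel.append {V Λ : Type*} {E : V → Λ → V → Prop} {u v z : V}
    {w1 w2 : List Λ} (h1 : PathLabel E u v w1) (h2 : PathLabel E v z w2) :
    PathLabel E u z (w1 ++ w2) := by
  induction h1 with
  | nil => exact h2
  | cons e _ ih => exact PathLabel.cons e (ih h2)

private lemma PathLabel.last_edge {V Λ : Type*} {E : V → Λ → V → Prop} {u v : V}
    {w : List Λ} (h : PathLabel E u v w) :
    ∀ (a : Λ) (w' : List Λ), w = w' ++ [a] → ∃ z, E z a v := by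
  induction h with
  | nil => intro a w' h; simp at h
  | @cons u m v l ls e p ih =>
    intro a w' h
    cases w' with
    | nil =>
      simp at h
      obtain ⟨rfl, rfl⟩ := h
      cases p
      exact ⟨u, e⟩
    | cons b w'' =>
      simp at h
      exact ih a w'' h.2

private lemma Dyck1.length_even {w : List Bool} (h : Dyck1 w) : Even w.length := by
  induction h with
  | nil => simp
  | cons _ _ ihu ihv =>
    simp only [List.length_cons, List.length_append]
    obtain ⟨a, ha⟩ := ihu; obtain ⟨b, hb⟩ := ihv; exact ⟨a + b + 1, by omega⟩

private lemma Dyck1.head_false {w : List Bool} (h : Dyck1 w) :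
    w = [] ∨ ∃ w', w = false :: w' := by
  cases h with
  | nil => exact Or.inl rfl
  | cons _ _ => exact Or.inr ⟨_, rfl⟩

private lemma Dyck1.last_true {w : List Bool} (h : Dyck1 w) :
    w = [] ∨ ∃ w', w = w' ++ [true] := by
  induction h with
  | nil => exact Or.inl rfl
  | @cons u v _ _ _ ihv =>
    right
    rcases ihv with rfl | ⟨v', rfl⟩
    · exact ⟨false :: u, rfl⟩
    · exact ⟨false :: u ++ true :: v', by simp⟩

private lemma PathLabel.loop {V : Type*} {E : V → Bool → V → Prop}
    (hsym : ∀ v θ w, E v θ w → E w θ v) {s x : V} {b : Bool} (hx : E s b x) (n : ℕ) :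
    PathLabel E s s (List.replicate (2 * n) b) := by
  induction n with
  | zero => exact PathLabel.nil s
  | succ n ih =>
    have : 2 * (n + 1) = (2 * n) + 1 + 1 := by ring
    rw [this, List.replicate_succ, List.replicate_succ]
    exact PathLabel.cons hx (PathLabel.cons (hsym _ _ _ hx) ih)

theorem one_letter_undirected_dyck_reachability {V : Type*}
    (E : V → Bool → V → Prop) (hsym : ∀ v θ w, E v θ w → E w θ v)
    (s t : V) (hst : s ≠ t) :
    (∃ w, PathLabel E s t w ∧ Dyck1 w) ↔
      (∃ x, E s false x) ∧ (∃ y, E t true y) ∧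
        (∃ w, PathLabel E s t w ∧ Even w.length) := by
  constructor
  · rintro ⟨w, pw, dw⟩
    have hne : w ≠ [] := by
      rintro rfl
      cases pw
      exact hst rfl
    refine ⟨?_, ?_, w, pw, dw.length_even⟩
    · rcases dw.head_false with rfl | ⟨w', rfl⟩
      · exact absurd rfl hne
      · cases pw with
        | cons e _ => exact ⟨_, e⟩
    · rcases dw.last_true with rfl | ⟨w', rfl⟩
      · exact absurd rfl hne
      · obtain ⟨z, hz⟩ := pw.last_edge true w' rfl
        exact ⟨z, hsym _ _ _ hz⟩
  · rintro ⟨⟨x, hx⟩, ⟨y, hy⟩, ⟨w, pw, hev⟩⟩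
    obtain ⟨m, hm⟩ := hev
    have hk := List.count_false_add_count_true w
    set k := w.length with hkdef
    set cf := w.count false with hcf
    set ct := w.count true with hct
    refine ⟨List.replicate k false ++ (w ++ List.replicate (2 * cf) true), ?_, ?_⟩
    · have p1 : PathLabel E s s (List.replicate k false) := by
        have := PathLabel.loop hsym hx m
        rwa [show 2 * m = k by omega] at this
      exact p1.append (pw.append (PathLabel.loop hsym hy cf))
    · apply dyck1_of_balanced
      · simp only [List.count_append, List.count_replicate]
        norm_num
        omega
      · intro i
        have hY : (w.take (i - k)).count true ≤ ct :=
          (w.take_sublist _).count_le _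
        have hX : (w.take (i - k)).count false ≤ cf :=
          (w.take_sublist _).count_le _
        have hXY := List.count_false_add_count_true (w.take (i - k))
        rw [List.length_take] at hXY
        simp only [List.take_append, List.count_append, List.take_replicate,
          List.count_replicate, List.length_append, List.length_replicate]
        norm_num
        omega
end

section
/- Let n ≥ 1 and fix a bijection θ : {1,...,n} → V. Define the monoid morphism φ on L = V ∪ {v̄ : v ∈ V} ∪ {•} with values in words over {a, b, ā, b̄} by φ(•) = a·ā, φ(vᵢ) = aⁱ·b·a^{n+1-i}, and φ(v̄ᵢ) = ā^{n+1-i}·b̄·āⁱ. Then φ maps every near-Dyck word over L to a Dyck word over {a, b, ā, b̄} (with matching pairs (a,ā) and (b,b̄)). -/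
/-- Alphabet for the near-Dyck language over `V = Fin n`: `none` is the
neutral letter `•`, `some (i, false)` is `vᵢ` and `some (i, true)` is `v̄ᵢ`. -/
abbrev NearLetter (n : ℕ) := Option (Fin n × Bool)

/-- The near-Dyck language D' generated by
`S → ε | S·•·S | v·S·v̄·S` (for each `v ∈ V`). -/
inductive NearDyck {n : ℕ} : List (NearLetter n) → Prop
  | nil : NearDyck []
  | dot {u v : List (NearLetter n)} :
      NearDyck u → NearDyck v → NearDyck (u ++ none :: v)
  | pair (i : Fin n) {u v : List (NearLetter n)} :
      NearDyck u → NearDyck v →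
      NearDyck (some (i, false) :: u ++ some (i, true) :: v)

/-- The two-letter Dyck language over `Fin 2 × Bool`, where `(0,false)` = a,
`(1,false)` = b, `(0,true)` = ā, `(1,true)` = b̄. -/
inductive Dyck : List (Fin 2 × Bool) → Prop
  | nil : Dyck []
  | cons (i : Fin 2) {u v : List (Fin 2 × Bool)} :
      Dyck u → Dyck v → Dyck ((i, false) :: u ++ (i, true) :: v)

/-- The encoding morphism φ : φ(•) = a·ā, φ(vᵢ) = aⁱ·b·a^(n+1-i),
φ(v̄ᵢ) = ā^(n+1-i)·b̄·āⁱ (here `i : Fin n` stands for the index `i+1 ∈ {1,…,n}`,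
so the exponents are `i+1` and `n-i`). -/
def phi {n : ℕ} : NearLetter n → List (Fin 2 × Bool)
  | none => [((0 : Fin 2), false), ((0 : Fin 2), true)]
  | some (i, false) =>
      List.replicate (i.val + 1) ((0 : Fin 2), false) ++
        [((1 : Fin 2), false)] ++ List.replicate (n - i.val) ((0 : Fin 2), false)
  | some (i, true) =>
      List.replicate (n - i.val) ((0 : Fin 2), true) ++
        [((1 : Fin 2), true)] ++ List.replicate (i.val + 1) ((0 : Fin 2), true)


lemma Dyck.append' {u v : List (Fin 2 × Bool)} (hu : Dyck u) (hv : Dyck v) :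
    Dyck (u ++ v) := by
  induction hu with
  | nil => simpa using hv
  | cons i h1 h2 ih1 ih2 =>
    have := Dyck.cons i h1 ih2
    simpa [List.append_assoc] using this

lemma rep_shift (k : ℕ) (x : Fin 2 × Bool) (V : List (Fin 2 × Bool)) :
    List.replicate k x ++ x :: V = x :: (List.replicate k x ++ V) := by
  induction k with
  | zero => simp
  | succ k ih => simp_all [List.replicate_succ]

lemma dyck_wrap (k : ℕ) {M V : List (Fin 2 × Bool)} (hM : Dyck M) (hV : Dyck V) :
    Dyck (List.replicate k ((0 : Fin 2), false) ++ M ++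
      List.replicate k ((0 : Fin 2), true) ++ V) := by
  induction k generalizing V with
  | zero => simpa using hM.append' hV
  | succ k ih =>
    have h := Dyck.cons 0 (by simpa using ih (V := []) Dyck.nil) hV
    have heq : List.replicate (k+1) ((0 : Fin 2), false) ++ M ++
        List.replicate (k+1) ((0 : Fin 2), true) ++ V =
        ((0 : Fin 2), false) :: (List.replicate k ((0 : Fin 2), false) ++ M ++
          List.replicate k ((0 : Fin 2), true)) ++ ((0 : Fin 2), true) :: V := by
      simp [List.replicate_succ, List.append_assoc, rep_shift]
    rw [heq]
    simpa [List.append_assoc] using h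

theorem nearDyck_phi_dyck {n : ℕ} (hn : 1 ≤ n) (w : List (NearLetter n))
    (h : NearDyck w) : Dyck ((w.map phi).flatten) := by
  induction h with
  | nil => exact Dyck.nil
  | dot h1 h2 ih1 ih2 =>
    have hd : Dyck [((0 : Fin 2), false), ((0 : Fin 2), true)] := by
      simpa using Dyck.cons 0 Dyck.nil Dyck.nil
    have := ih1.append' (hd.append' ih2)
    simpa [phi, List.append_assoc] using this
  | pair i h1 h2 ih1 ih2 =>
    have inner := dyck_wrap (n - i.val) ih1 Dyck.nil
    have mid := Dyck.cons 1 (by simpa using inner) Dyck.nil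
    have outer := dyck_wrap (i.val + 1) mid ih2
    simpa [phi, List.append_assoc] using outer.append' Dyck.nil
end
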